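/- Fix positive real weights ω = (ω₁,…,ω_m), set q = ω₁⋯ω_m and q_i = q/ω_i, assume q_i ≥ 1 for each i, and let ρ(u) = (Σ_{i=1}^m |u_i|^{2q_i})^{1/(2q)}. Then there exists a constant L > 0, depending only on m and ω, such that for every u ∈ ℝ^m with all coordinates u_i ≠ 0 and every index i: |∂ρ/∂u_i(u)| ≤ L·ρ(u)^{1−ω_i}. -/

import Mathlib

/-!
Write `ρ = S ^ r` with `S = Σ_j |u_j| ^ c_j`, `c_j = 2 q_j`, `r = 1 / (2q)`. The chain rule gives
`|∂ρ/∂u_i| = r c_i S ^ (r - 1) |u_i| ^ (c_i - 1)`, and `|u_i| ^ c_i ≤ S` with `c_i ≥ 1` gives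
`|u_i| ^ (c_i - 1) ≤ S ^ (1 - 1/c_i)`. Since `r c_i = 1/ω_i` and `r - 1/c_i = r (1 - ω_i)`,
this is `|∂ρ/∂u_i| ≤ ρ ^ (1 - ω_i) / ω_i`.
-/

/-- The weighted quasi-norm `ρ_ω(u) = (Σ_i |u_i|^{2 q_i})^{1/(2q)}` with `q = ∏ ω_j`,
`q_i = q / ω_i`. -/
noncomputable def rhoW {m : ℕ} (ω : Fin m → ℝ) (u : Fin m → ℝ) : ℝ :=
  (∑ i, |u i| ^ (2 * (∏ j, ω j) / ω i)) ^ (1 / (2 * ∏ j, ω j))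

theorem hasDerivAt_abs_rpow_of_ne_zero {x : ℝ} (hx : x ≠ 0) (p : ℝ) :
    HasDerivAt (fun y : ℝ => |y| ^ p) (p * |x| ^ (p - 1) * SignType.sign x) x :=
  (Real.hasDerivAt_rpow_const (Or.inl (abs_ne_zero.2 hx))).comp x (hasDerivAt_abs hx)

theorem Real.rpow_sub_one_le_of_rpow_le {x S c : ℝ} (hx : 0 ≤ x) (hc : 1 ≤ c) (h : x ^ c ≤ S) :
    x ^ (c - 1) ≤ S ^ (1 - c⁻¹) := by
  have hc0 : c ≠ 0 := by positivity
  calc x ^ (c - 1) = (x ^ c) ^ (1 - c⁻¹) := by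
        rw [← Real.rpow_mul hx, mul_sub, mul_one, mul_inv_cancel₀ hc0]
    _ ≤ S ^ (1 - c⁻¹) :=
        Real.rpow_le_rpow (by positivity) h (sub_nonneg.2 (inv_le_one_of_one_le₀ hc))

section PowerSum

variable {ι : Type*} [Fintype ι] (c : ι → ℝ) {u : ι → ℝ}

theorem abs_rpow_le_sum_abs_rpow (i : ι) : |u i| ^ c i ≤ ∑ j, |u j| ^ c j :=
  Finset.single_le_sum (f := fun j => |u j| ^ c j) (fun j _ => by positivity) (Finset.mem_univ i)

theorem sum_abs_rpow_pos {i : ι} (hi : u i ≠ 0) : 0 < ∑ j, |u j| ^ c j :=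
  (Real.rpow_pos_of_pos (abs_pos.2 hi) _).trans_le (abs_rpow_le_sum_abs_rpow c i)

theorem hasFDerivAt_sum_abs_rpow (hu : ∀ j, u j ≠ 0) :
    HasFDerivAt (fun v : ι → ℝ => ∑ j, |v j| ^ c j)
      (∑ j, (c j * |u j| ^ (c j - 1) * SignType.sign (u j)) •
        (ContinuousLinearMap.proj j : (ι → ℝ) →L[ℝ] ℝ)) u := by
  have hterm (j : ι) : HasFDerivAt (fun v : ι → ℝ => |v j| ^ c j)
      ((c j * |u j| ^ (c j - 1) * SignType.sign (u j)) •
        (ContinuousLinearMap.proj j : (ι → ℝ) →L[ℝ] ℝ)) u :=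
    have hproj : HasFDerivAt (fun v : ι → ℝ => v j)
        (ContinuousLinearMap.proj j : (ι → ℝ) →L[ℝ] ℝ) u := hasFDerivAt_apply j u
    ((hasDerivAt_abs_rpow_of_ne_zero (hu j) (c j)).comp_hasFDerivAt u hproj :)
  simpa using HasFDerivAt.fun_sum (u := Finset.univ) fun j _ => hterm j

theorem fderiv_rpow_sum_abs_rpow_single [DecidableEq ι] (r : ℝ) (hu : ∀ j, u j ≠ 0) (i : ι) :
    fderiv ℝ (fun v : ι → ℝ => (∑ j, |v j| ^ c j) ^ r) u (Pi.single i 1) =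
      r * (∑ j, |u j| ^ c j) ^ (r - 1) * (c i * |u i| ^ (c i - 1) * SignType.sign (u i)) := by
  have h : HasFDerivAt (fun v : ι → ℝ => (∑ j, |v j| ^ c j) ^ r)
      ((r * (∑ j, |u j| ^ c j) ^ (r - 1)) • ∑ j, (c j * |u j| ^ (c j - 1) * SignType.sign (u j)) •
        (ContinuousLinearMap.proj j : (ι → ℝ) →L[ℝ] ℝ)) u :=
    ((Real.hasDerivAt_rpow_const (Or.inl (sum_abs_rpow_pos c (hu i)).ne')).comp_hasFDerivAt u
      (hasFDerivAt_sum_abs_rpow c hu) :)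
  simp [h.fderiv, Pi.single_apply]

theorem abs_fderiv_rpow_sum_abs_rpow_single_le [DecidableEq ι] {r : ℝ} (hr : 0 ≤ r)
    (hu : ∀ j, u j ≠ 0) (i : ι) (hc : 1 ≤ c i) :
    |fderiv ℝ (fun v : ι → ℝ => (∑ j, |v j| ^ c j) ^ r) u (Pi.single i 1)| ≤
      r * c i * (∑ j, |u j| ^ c j) ^ (r - (c i)⁻¹) := by
  set S := ∑ j, |u j| ^ c j
  have hS : 0 < S := sum_abs_rpow_pos c (hu i)
  have hui : |u i| ^ (c i - 1) ≤ S ^ (1 - (c i)⁻¹) :=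
    Real.rpow_sub_one_le_of_rpow_le (abs_nonneg _) hc (abs_rpow_le_sum_abs_rpow c i)
  have hsign : |(SignType.sign (u i) : ℝ)| = 1 := by
    rcases (hu i).lt_or_gt with h | h <;> simp [h]
  rw [fderiv_rpow_sum_abs_rpow_single c r hu i]
  calc _ = r * c i * (S ^ (r - 1) * |u i| ^ (c i - 1)) := by
        rw [abs_mul, abs_mul, abs_mul, abs_mul, hsign, abs_of_nonneg hr,
          abs_of_pos (Real.rpow_pos_of_pos hS _), abs_of_nonneg (zero_le_one.trans hc),
          abs_of_nonneg (by positivity)]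
        ring
    _ ≤ r * c i * (S ^ (r - 1) * S ^ (1 - (c i)⁻¹)) := by gcongr
    _ = r * c i * S ^ (r - (c i)⁻¹) := by rw [← Real.rpow_add hS]; ring_nf

end PowerSum

/-- there is a constant `L > 0`, depending only on `m` and the weights `ω`
(with all `q_i = q/ω_i ≥ 1`), such that for every point `u` with all coordinates nonzero and
every index `i`, the partial derivative of `ρ_ω` satisfies
`|∂ρ_ω/∂u_i(u)| ≤ L · ρ_ω(u)^{1-ω_i}`. -/
theorem abs_partialDeriv_rhoW_le {m : ℕ} (ω : Fin m → ℝ) (hω : ∀ i, 0 < ω i)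
    (hq : ∀ i, 1 ≤ (∏ j, ω j) / ω i) :
    ∃ L > (0 : ℝ), ∀ u : Fin m → ℝ, (∀ i, u i ≠ 0) → ∀ i : Fin m,
      |fderiv ℝ (rhoW ω) u (Pi.single i 1)| ≤ L * rhoW ω u ^ (1 - ω i) := by
  set q := ∏ j, ω j with hq_def
  have hq0 : 0 < q := Finset.prod_pos fun j _ => hω j
  have hinv (j : Fin m) : 0 ≤ 1 / ω j := (one_div_pos.2 (hω j)).le
  refine ⟨1 + ∑ j, 1 / ω j, by
    linarith [Finset.sum_nonneg (s := Finset.univ) fun j _ => hinv j],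
    fun u hu i => ?_⟩
  have hc : 1 ≤ 2 * q / ω i := by rw [mul_div_assoc]; linarith [hq i]
  have hL : 1 / ω i ≤ 1 + ∑ j, 1 / ω j := by
    linarith [Finset.single_le_sum (f := fun j => 1 / ω j) (fun j _ => hinv j) (Finset.mem_univ i)]
  set S := ∑ j, |u j| ^ (2 * q / ω j)
  have hρ : rhoW ω u ^ (1 - ω i) = S ^ (1 / (2 * q) - (2 * q / ω i)⁻¹) := by
    rw [rhoW, ← hq_def, ← Real.rpow_mul (Finset.sum_nonneg fun j _ => by positivity)]
    congr 1
    field_simp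
  calc _ ≤ 1 / (2 * q) * (2 * q / ω i) * S ^ (1 / (2 * q) - (2 * q / ω i)⁻¹) :=
        abs_fderiv_rpow_sum_abs_rpow_single_le (fun j => 2 * q / ω j) (by positivity) hu i hc
    _ = 1 / ω i * S ^ (1 / (2 * q) - (2 * q / ω i)⁻¹) := by field_simp
    _ ≤ _ := by rw [hρ]; gcongr
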